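/- arXiv:2302.14664 — 4 statements merged into one kernel-verified Lean document; each statement's English description precedes it below -/
import Mathlib

section
/- Let m ≥ n+2 with n ≥ 2, and let {i_1, i_2, …, i_{n+1}} ⊆ [m] with i_1 < i_2 < … < i_{n+1}. Then N[i_1, …, i_{n-1}] is a maximal simplex of dimension m−n, and L[i_1, …, i_{n+1}] is a maximal simplex of dimension n, in the Vietoris–Rips complex VR(F_n^m, 2). -/
open Finset

/-- An abstract simplicial complex on a vertex type `V`: a collection of nonempty
finite subsets of `V` (the faces), closed under taking nonempty subsets. -/
structure AbsSC (V : Type) where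
  faces : Set (Finset V)
  not_empty_mem : ∅ ∉ faces
  down_closed : ∀ s ∈ faces, ∀ t : Finset V, t ⊆ s → t ≠ ∅ → t ∈ faces

namespace AbsSC

variable {V W : Type}

/-- The vertex set of a simplicial complex. -/
def vertices (K : AbsSC V) : Set V := {v | ({v} : Finset V) ∈ K.faces}

/-- The geometric realization of a simplicial complex: the space of convex weightings
supported on a face, topologized as a subspace of `V → ℝ`. -/
def space (K : AbsSC V) : Type :=
  {f : V → ℝ // (∀ v, 0 ≤ f v) ∧ ∃ s ∈ K.faces, (∀ v, f v ≠ 0 → v ∈ s) ∧ ∑ v ∈ s, f v = 1}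

instance (K : AbsSC V) : TopologicalSpace K.space := by unfold space; infer_instance

/-- `L` is a subcomplex of `K`. -/
def IsSubcomplex (L K : AbsSC V) : Prop := L.faces ⊆ K.faces

/-- Homotopy equivalence of simplicial complexes (of their geometric realizations). -/
def HEquiv (K : AbsSC V) (L : AbsSC W) : Prop :=
  Nonempty (ContinuousMap.HomotopyEquiv K.space L.space)

/-- The realization of `K` is homotopy equivalent to the topological space `X`. -/
def HEquivTop (K : AbsSC V) (X : Type) [TopologicalSpace X] : Prop :=
  Nonempty (ContinuousMap.HomotopyEquiv K.space X)

/-- The inclusion of realizations induced by a subcomplex inclusion. -/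
def incl {L K : AbsSC V} (h : L.faces ⊆ K.faces) : C(L.space, K.space) where
  toFun f := ⟨f.1, f.2.1, by obtain ⟨s, hs, h1, h2⟩ := f.2.2; exact ⟨s, h hs, h1, h2⟩⟩
  continuous_toFun := Continuous.subtype_mk continuous_subtype_val _

variable [DecidableEq V]

/-- The link of a vertex. -/
def link (K : AbsSC V) (v : V) : AbsSC V where
  faces := {σ | σ ≠ ∅ ∧ v ∉ σ ∧ σ ∪ {v} ∈ K.faces}
  not_empty_mem h := h.1 rfl
  down_closed := by
    rintro s ⟨hne, hv, hs⟩ t hts htne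
    exact ⟨htne, fun hvt => hv (hts hvt),
      K.down_closed _ hs _ (Finset.union_subset_union hts (Finset.Subset.refl _)) (by simp [Finset.union_eq_empty])⟩

lemma link_subset (K : AbsSC V) (v : V) : (K.link v).faces ⊆ K.faces := by
  rintro σ ⟨hne, hv, hσ⟩
  exact K.down_closed _ hσ _ Finset.subset_union_left hne

/-- The complex induced on the vertices other than `v`. -/
def delete (K : AbsSC V) (v : V) : AbsSC V where
  faces := {σ | σ ∈ K.faces ∧ v ∉ σ}
  not_empty_mem h := K.not_empty_mem h.1
  down_closed := by
    rintro s ⟨hs, hv⟩ t hts htne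
    exact ⟨K.down_closed _ hs _ hts htne, fun h => hv (hts h)⟩

/-- The star of a vertex: `st_K(v) = {σ : σ ∪ {v} ∈ K}`. -/
def star (K : AbsSC V) (v : V) : AbsSC V where
  faces := {σ | σ ≠ ∅ ∧ σ ∪ {v} ∈ K.faces}
  not_empty_mem h := h.1 rfl
  down_closed := by
    rintro s ⟨hne, hs⟩ t hts htne
    exact ⟨htne,
      K.down_closed _ hs _ (Finset.union_subset_union hts (Finset.Subset.refl _)) (by simp [Finset.union_eq_empty])⟩

/-- The star cluster of a subcomplex `L` in `K`: the union of stars of vertices of `L`. -/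
def starCluster (K L : AbsSC V) : AbsSC V where
  faces := {σ | σ ≠ ∅ ∧ ∃ v, ({v} : Finset V) ∈ L.faces ∧ σ ∪ {v} ∈ K.faces}
  not_empty_mem h := h.1 rfl
  down_closed := by
    rintro s ⟨hne, v, hvL, hs⟩ t hts htne
    exact ⟨htne, v, hvL,
      K.down_closed _ hs _ (Finset.union_subset_union hts (Finset.Subset.refl _)) (by simp [Finset.union_eq_empty])⟩

/-- The union of two simplicial complexes. -/
def union (K₁ K₂ : AbsSC V) : AbsSC V where
  faces := K₁.faces ∪ K₂.faces
  not_empty_mem h := by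
    rcases h with h | h
    exacts [K₁.not_empty_mem h, K₂.not_empty_mem h]
  down_closed := by
    rintro s (hs | hs) t hts htne
    exacts [Or.inl (K₁.down_closed _ hs _ hts htne), Or.inr (K₂.down_closed _ hs _ hts htne)]

/-- The union of a family of simplicial complexes. -/
def iUnionC {ι : Type} (F : ι → AbsSC V) : AbsSC V where
  faces := ⋃ i, (F i).faces
  not_empty_mem h := by
    obtain ⟨i, hi⟩ := Set.mem_iUnion.mp h
    exact (F i).not_empty_mem hi
  down_closed := by
    intro s hs t hts htne
    obtain ⟨i, hi⟩ := Set.mem_iUnion.mp hs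
    exact Set.mem_iUnion.mpr ⟨i, (F i).down_closed _ hi _ hts htne⟩

/-- The `n`-skeleton of a complex: all faces with at most `n+1` vertices. -/
def skeleton (K : AbsSC V) (n : ℕ) : AbsSC V where
  faces := {σ | σ ∈ K.faces ∧ σ.card ≤ n + 1}
  not_empty_mem h := K.not_empty_mem h.1
  down_closed := by
    rintro s ⟨hs, hcard⟩ t hts htne
    exact ⟨K.down_closed _ hs _ hts htne, le_trans (Finset.card_le_card hts) hcard⟩

/-- The simplicial complex generated by a single simplex `s` (all its nonempty subsets). -/
def simplexCx (s : Finset V) : AbsSC V where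
  faces := {t | t ≠ ∅ ∧ t ⊆ s}
  not_empty_mem h := h.1 rfl
  down_closed := by
    rintro a ⟨hne, has⟩ t hta htne
    exact ⟨htne, hta.trans has⟩

/-- A maximal simplex (facet) of `K`. -/
def IsFacet (K : AbsSC V) (σ : Finset V) : Prop :=
  σ ∈ K.faces ∧ ∀ τ ∈ K.faces, σ ⊆ τ → τ = σ

/-- `K` is a clique complex: any nonempty set of vertices which pairwise span edges is a face. -/
def IsCliqueCx (K : AbsSC V) : Prop :=
  ∀ σ : Finset V, σ ≠ ∅ → (∀ v ∈ σ, ({v} : Finset V) ∈ K.faces) →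
    (∀ v ∈ σ, ∀ w ∈ σ, v ≠ w → ({v, w} : Finset V) ∈ K.faces) → σ ∈ K.faces

/-- `L` is a full subcomplex of `K`. -/
def IsFull (L K : AbsSC V) : Prop :=
  ∀ σ ∈ K.faces, (∀ v ∈ σ, ({v} : Finset V) ∈ L.faces) → σ ∈ L.faces

end AbsSC

noncomputable section

/-- The `n`-dimensional sphere. -/
abbrev Sph (n : ℕ) : Type := Metric.sphere (0 : EuclideanSpace ℝ (Fin (n + 1))) 1

/-- A base point on the sphere. -/
def sphBase (n : ℕ) : Sph n :=
  ⟨EuclideanSpace.single 0 1, by simp⟩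

/-- Relation gluing the base points of `c` copies of a pointed space to an auxiliary point. -/
inductive wedgeRel (c : ℕ) (X : Type) (x₀ : X) : Unit ⊕ Fin c × X → Unit ⊕ Fin c × X → Prop
  | glue (i : Fin c) : wedgeRel c X x₀ (Sum.inl ()) (Sum.inr (i, x₀))

/-- The wedge sum of `c` copies of the pointed space `(X, x₀)`. -/
def Wedge (c : ℕ) (X : Type) [TopologicalSpace X] (x₀ : X) : Type := Quot (wedgeRel c X x₀)

instance (c : ℕ) (X : Type) [TopologicalSpace X] (x₀ : X) : TopologicalSpace (Wedge c X x₀) := by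
  unfold Wedge; infer_instance

/-- The base point of the wedge. -/
def wedgePt (c : ℕ) (X : Type) [TopologicalSpace X] (x₀ : X) : Wedge c X x₀ :=
  Quot.mk _ (Sum.inl ())

/-- The wedge sum of `c` copies of the `n`-sphere. -/
abbrev WedgeSph (n c : ℕ) : Type := Wedge c (Sph n) (sphBase n)

/-- The base point of a wedge of spheres. -/
def wedgeSphPt (n c : ℕ) : WedgeSph n c := wedgePt c _ _

/-- Relation gluing the two base points in a binary wedge. -/
inductive wedge2Rel (X Y : Type) (x₀ : X) (y₀ : Y) : X ⊕ Y → X ⊕ Y → Prop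
  | glue : wedge2Rel X Y x₀ y₀ (Sum.inl x₀) (Sum.inr y₀)

/-- The wedge sum `X ∨ Y` of two pointed spaces. -/
def Wedge2 (X Y : Type) [TopologicalSpace X] [TopologicalSpace Y] (x₀ : X) (y₀ : Y) : Type :=
  Quot (wedge2Rel X Y x₀ y₀)

instance (X Y : Type) [TopologicalSpace X] [TopologicalSpace Y] (x₀ : X) (y₀ : Y) :
    TopologicalSpace (Wedge2 X Y x₀ y₀) := by unfold Wedge2; infer_instance

/-- Relation collapsing the top and bottom of the cylinder `X × [0,1]` to two cone points. -/
inductive suspRel (X : Type) : X × unitInterval ⊕ Bool → X × unitInterval ⊕ Bool → Prop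
  | zero (x : X) : suspRel X (Sum.inl (x, 0)) (Sum.inr false)
  | one (x : X) : suspRel X (Sum.inl (x, 1)) (Sum.inr true)

/-- The (unreduced) suspension `Σ X`. -/
def Susp (X : Type) [TopologicalSpace X] : Type := Quot (suspRel X)

instance (X : Type) [TopologicalSpace X] : TopologicalSpace (Susp X) := by
  unfold Susp; infer_instance

/-- The north cone point of the suspension. -/
def suspNorth (X : Type) [TopologicalSpace X] : Susp X := Quot.mk _ (Sum.inr true)

end

/-- The Vietoris–Rips complex at scale `r` of a collection `F` of finite subsets of `ℕ`,
with respect to the symmetric difference metric `d(A,B) = |A Δ B|`. -/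
def VRc (F : Set (Finset ℕ)) (r : ℕ) : AbsSC (Finset ℕ) where
  faces := {σ | σ.Nonempty ∧ (∀ A ∈ σ, A ∈ F) ∧
    ∀ A ∈ σ, ∀ B ∈ σ, (symmDiff A B).card ≤ r}
  not_empty_mem h := by simpa using h.1
  down_closed := by
    rintro s ⟨hne, hF, hd⟩ t hts htne
    exact ⟨Finset.nonempty_iff_ne_empty.mpr htne, fun A hA => hF A (hts hA),
      fun A hA B hB => hd A (hts hA) B (hts hB)⟩

/-- `F_n^m`: all `n`-element subsets of `[m] = {1, …, m}`. -/
def Fnm (m n : ℕ) : Set (Finset ℕ) := {A | A ⊆ Finset.Icc 1 m ∧ A.card = n}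

/-- `F_{≤ n}^m`: all subsets of `[m]` of cardinality at most `n`. -/
def Fle (m n : ℕ) : Set (Finset ℕ) := {A | A ⊆ Finset.Icc 1 m ∧ A.card ≤ n}

/-- The simplex `N[C] = {A : C ⊆ A, |A \ C| = 1}` inside `[m]`. -/
def NSimp (m : ℕ) (C : Finset ℕ) : Finset (Finset ℕ) :=
  (Finset.Icc 1 m \ C).image (fun x => insert x C)

/-- The simplex `L[S]`: all subsets of `S` obtained by removing one element. -/
def LSimp (S : Finset ℕ) : Finset (Finset ℕ) := S.image (fun x => S.erase x)

/-- The total order `≺`: first compare cardinalities, then compare the increasing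
enumerations lexicographically. -/
def precLT (A B : Finset ℕ) : Prop :=
  A.card < B.card ∨
    (A.card = B.card ∧ List.Lex (· < ·) (A.sort (· ≤ ·)) (B.sort (· ≤ ·)))

/-- `A ⪯ B`. -/
def precLE (A B : Finset ℕ) : Prop := precLT A B ∨ A = B

/-- `F^m_{≺ A}`: all subsets of `[m]` strictly preceding `A`. -/
def FprecLT (m : ℕ) (A : Finset ℕ) : Set (Finset ℕ) :=
  {B | B ⊆ Finset.Icc 1 m ∧ precLT B A}

/-- `F^m_{⪯ A}`: all subsets of `[m]` preceding (or equal to) `A`. -/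
def FprecLE (m : ℕ) (A : Finset ℕ) : Set (Finset ℕ) :=
  {B | B ⊆ Finset.Icc 1 m ∧ precLE B A}

/-- The `j`-th value (0-indexed) of an enumeration `i : Fin n → ℕ`. -/
def ith {n : ℕ} (i : Fin n → ℕ) (j : ℕ) : ℕ := if h : j < n then i ⟨j, h⟩ else 0

/-- The `ℓ`-th entry (1-indexed) of the enumeration, as an integer, with `i_0 = -1`. -/
def ivZ {n : ℕ} (i : Fin n → ℕ) (ℓ : ℕ) : ℤ := if ℓ = 0 then -1 else (ith i (ℓ - 1) : ℤ)

/-- For `B = i_1 i_2 ⋯ i_n` (increasing), with `d_1 = i_1` and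
`d_ℓ = i_ℓ - (i_{ℓ-1} + 1)`, `r_B = Σ_{k=2}^{n-2} C(k,2) + Σ_{ℓ=1}^{n-2} d_ℓ·C(n-ℓ,2)`. -/
def rA (B : Finset ℕ) : ℕ :=
  (∑ k ∈ Finset.Icc 2 (B.card - 2), Nat.choose k 2) +
    ∑ ℓ ∈ Finset.Icc 1 (B.card - 2),
      ((B.sort (· ≤ ·)).getD (ℓ - 1) 0 -
        (if ℓ = 1 then 0 else (B.sort (· ≤ ·)).getD (ℓ - 2) 0 + 1)) * Nat.choose (B.card - ℓ) 2

/-- For `B = i_1 i_2 ⋯ i_n` (increasing), with `c_1 = i_1 - 1` and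
`c_ℓ = i_ℓ - (i_{ℓ-1} + 1)`, `s_B = Σ_{k=2}^{n-2} C(k,2) + Σ_{ℓ=1}^{n-2} c_ℓ·C(n-ℓ,2)`. -/
def sA (B : Finset ℕ) : ℕ :=
  (∑ k ∈ Finset.Icc 2 (B.card - 2), Nat.choose k 2) +
    ∑ ℓ ∈ Finset.Icc 1 (B.card - 2),
      ((B.sort (· ≤ ·)).getD (ℓ - 1) 0 -
        (if ℓ = 1 then 1 else (B.sort (· ≤ ·)).getD (ℓ - 2) 0 + 1)) * Nat.choose (B.card - ℓ) 2

/-- `t_n = Σ_{A ⊆ [m], |A| = n} r_A`. -/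
def tN (m n : ℕ) : ℕ :=
  ∑ A ∈ (Finset.Icc 1 m).powerset.filter (fun A => A.card = n), rA A

/-- `o_{m,n} = Σ { s_A : A ∈ F^m_{n+2}, min A ≥ 2 }`. -/
def omn (m n : ℕ) : ℕ :=
  ∑ A ∈ (Finset.Icc 1 m).powerset.filter (fun A => A.card = n + 2 ∧ ∀ x ∈ A, 2 ≤ x), sA A
lemma card_symmDiff' (A B : Finset ℕ) : (symmDiff A B).card = (A\B).card + (B\A).card := by
  rw [symmDiff_def, sup_eq_union, Finset.card_union_of_disjoint (disjoint_sdiff_sdiff)]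

lemma sdiff_le_one {A B : Finset ℕ} (hA : A.card = B.card)
    (hd : (symmDiff A B).card ≤ 2) : (A\B).card ≤ 1 := by
  have h := Finset.card_sdiff_comm hA
  rw [card_symmDiff'] at hd
  omega

/-- `F_n^m` is the set used; local notation for faces. -/
lemma vrc_face_iff (F : Set (Finset ℕ)) (r : ℕ) (σ : Finset (Finset ℕ)) :
    σ ∈ (VRc F r).faces ↔ σ.Nonempty ∧ (∀ A ∈ σ, A ∈ F) ∧
      ∀ A ∈ σ, ∀ B ∈ σ, (symmDiff A B).card ≤ r := Iff.rfl

lemma mem_NSimp {m : ℕ} {C A : Finset ℕ} :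
    A ∈ NSimp m C ↔ ∃ x, (x ∈ Finset.Icc 1 m ∧ x ∉ C) ∧ insert x C = A := by
  simp [NSimp, Finset.mem_image, Finset.mem_sdiff]

lemma N_facet (m n : ℕ) (hn : 1 ≤ n) (hm : n + 2 ≤ m) (C : Finset ℕ)
    (hsub : C ⊆ Finset.Icc 1 m) (hcard : C.card + 1 = n) :
    AbsSC.IsFacet (VRc (Fnm m n) 2) (NSimp m C) ∧ (NSimp m C).card = m - n + 1 := by
  have hIcc : (Finset.Icc 1 m).card = m := by rw [Nat.card_Icc]; omega
  have hsd : (Finset.Icc 1 m \ C).card = m - n + 1 := by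
    rw [Finset.card_sdiff_of_subset hsub, hIcc]; omega
  have hne : (Finset.Icc 1 m \ C).Nonempty := by
    rw [← Finset.card_pos, hsd]; omega
  -- membership of elements in Fnm
  have hFnm : ∀ x, x ∈ Finset.Icc 1 m → x ∉ C → insert x C ∈ Fnm m n := by
    intro x hx hxC
    exact ⟨Finset.insert_subset hx hsub, by rw [Finset.card_insert_of_notMem hxC]; omega⟩
  have hsym : ∀ x ∈ Finset.Icc 1 m \ C, ∀ y ∈ Finset.Icc 1 m \ C,
      (symmDiff (insert x C) (insert y C)).card ≤ 2 := by
    intro x hx y hy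
    rcases eq_or_ne x y with rfl | hxy
    · simp
    · have hxC : x ∉ C := (Finset.mem_sdiff.mp hx).2
      have hyC : y ∉ C := (Finset.mem_sdiff.mp hy).2
      have : symmDiff (insert x C) (insert y C) = {x, y} := by
        rw [symmDiff_def]
        ext a
        simp only [sup_eq_union, Finset.mem_union, Finset.mem_sdiff, Finset.mem_insert,
          Finset.mem_singleton]
        constructor
        · rintro (⟨h1|h1,h2⟩|⟨h1|h1,h2⟩) <;> tauto
        · rintro (rfl|rfl) <;> tauto
      rw [this]
      exact le_trans (Finset.card_insert_le _ _) (by simp)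
  have hface : NSimp m C ∈ (VRc (Fnm m n) 2).faces := by
    refine ⟨?_, ?_, ?_⟩
    · obtain ⟨x, hx⟩ := hne
      exact ⟨insert x C, mem_NSimp.mpr ⟨x, Finset.mem_sdiff.mp hx, rfl⟩⟩
    · intro A hA
      obtain ⟨x, ⟨hx1, hx2⟩, rfl⟩ := mem_NSimp.mp hA
      exact hFnm x hx1 hx2
    · intro A hA B hB
      obtain ⟨x, hx, rfl⟩ := mem_NSimp.mp hA
      obtain ⟨y, hy, rfl⟩ := mem_NSimp.mp hB
      exact hsym x (Finset.mem_sdiff.mpr hx) y (Finset.mem_sdiff.mpr hy)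
  constructor
  · refine ⟨hface, ?_⟩
    rintro τ ⟨-, hτF, hτd⟩ hστ
    apply Finset.Subset.antisymm _ hστ
    intro B hB
    obtain ⟨hBsub, hBcard⟩ := hτF B hB
    have hd2 : ∀ A ∈ NSimp m C, (symmDiff A B).card ≤ 2 := fun A hA => hτd A (hστ hA) B hB
    -- first: C ⊆ B
    have hCB : C ⊆ B := by
      by_contra hc
      obtain ⟨c, hcC, hcB⟩ := Finset.not_subset.mp hc
      -- every x in Icc \ C is in B, and every c' in C \ {c} is in B
      have key : ∀ x ∈ Finset.Icc 1 m \ C, x ∈ B ∧ ∀ c' ∈ C, c' ≠ c → c' ∈ B := by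
        intro x hx
        have hxIcc := (Finset.mem_sdiff.mp hx).1
        have hxC := (Finset.mem_sdiff.mp hx).2
        have hA : insert x C ∈ NSimp m C := mem_NSimp.mpr ⟨x, Finset.mem_sdiff.mp hx, rfl⟩
        have hle : ((insert x C) \ B).card ≤ 1 := by
          apply sdiff_le_one _ (hd2 _ hA)
          rw [Finset.card_insert_of_notMem hxC, hBcard]; omega
        have hcmem : c ∈ (insert x C) \ B :=
          Finset.mem_sdiff.mpr ⟨Finset.mem_insert_of_mem hcC, hcB⟩
        have huniq := Finset.card_le_one.mp hle
        constructor
        · by_contra hxB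
          have : x = c := huniq x (Finset.mem_sdiff.mpr ⟨Finset.mem_insert_self _ _, hxB⟩) c hcmem
          exact hxC (this ▸ hcC)
        · intro c' hc' hne'
          by_contra hc'B
          exact hne' (huniq c' (Finset.mem_sdiff.mpr ⟨Finset.mem_insert_of_mem hc', hc'B⟩) c hcmem)
      obtain ⟨x₀, hx₀⟩ := hne
      have hsubB : (Finset.Icc 1 m \ C) ∪ C.erase c ⊆ B := by
        intro a ha
        rcases Finset.mem_union.mp ha with h | h
        · exact (key a h).1
        · exact (key x₀ hx₀).2 a (Finset.mem_of_mem_erase h) (Finset.ne_of_mem_erase h)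
      have hdisj : Disjoint (Finset.Icc 1 m \ C) (C.erase c) :=
        Finset.disjoint_left.mpr fun a ha haE =>
          (Finset.mem_sdiff.mp ha).2 (Finset.mem_of_mem_erase haE)
      have hcards := Finset.card_le_card hsubB
      rw [Finset.card_union_of_disjoint hdisj, hsd, Finset.card_erase_of_mem hcC] at hcards
      rw [hBcard] at hcards
      omega
    -- then B = insert x C for the unique x ∈ B \ C
    have hBC : (B \ C).card = 1 := by rw [Finset.card_sdiff_of_subset hCB, hBcard]; omega
    obtain ⟨x, hx⟩ := Finset.card_eq_one.mp hBC
    have hxB : x ∈ B := (Finset.mem_sdiff.mp (hx ▸ Finset.mem_singleton_self x)).1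
    have hxC : x ∉ C := (Finset.mem_sdiff.mp (hx ▸ Finset.mem_singleton_self x)).2
    apply mem_NSimp.mpr
    refine ⟨x, ⟨hBsub hxB, hxC⟩, ?_⟩
    have : B \ C ∪ C = B := Finset.sdiff_union_of_subset hCB
    rw [hx] at this
    rw [← this]
    ext a; simp [or_comm]
  · -- card
    rw [NSimp, Finset.card_image_of_injOn, hsd]
    intro x hx y hy hxy
    have hxC : x ∉ C := (Finset.mem_sdiff.mp hx).2
    have hxy' : insert x C = insert y C := hxy
    have h2 : x ∈ insert y C := by rw [← hxy']; exact Finset.mem_insert_self x C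
    rcases Finset.mem_insert.mp h2 with h | h
    · exact h
    · exact absurd h hxC

lemma mem_LSimp {S A : Finset ℕ} :
    A ∈ LSimp S ↔ ∃ x ∈ S, S.erase x = A := by
  simp [LSimp, Finset.mem_image]

lemma L_facet (m n : ℕ) (hn : 2 ≤ n) (S : Finset ℕ)
    (hsub : S ⊆ Finset.Icc 1 m) (hcard : S.card = n + 1) :
    AbsSC.IsFacet (VRc (Fnm m n) 2) (LSimp S) ∧ (LSimp S).card = n + 1 := by
  have hSne : S.Nonempty := Finset.card_pos.mp (by omega)
  have hFnm : ∀ x ∈ S, S.erase x ∈ Fnm m n := by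
    intro x hx
    exact ⟨(Finset.erase_subset _ _).trans hsub, by rw [Finset.card_erase_of_mem hx]; omega⟩
  have hface : LSimp S ∈ (VRc (Fnm m n) 2).faces := by
    refine ⟨⟨S.erase hSne.choose, mem_LSimp.mpr ⟨_, hSne.choose_spec, rfl⟩⟩, ?_, ?_⟩
    · intro A hA; obtain ⟨x, hx, rfl⟩ := mem_LSimp.mp hA; exact hFnm x hx
    · intro A hA B hB
      obtain ⟨x, hx, rfl⟩ := mem_LSimp.mp hA
      obtain ⟨y, hy, rfl⟩ := mem_LSimp.mp hB
      rcases eq_or_ne x y with rfl | hxy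
      · simp
      · have : symmDiff (S.erase x) (S.erase y) = {y, x} := by
          rw [symmDiff_def]
          ext a
          simp only [sup_eq_union, Finset.mem_union, Finset.mem_sdiff, Finset.mem_erase,
            Finset.mem_insert, Finset.mem_singleton]
          constructor
          · rintro (⟨⟨h1,h2⟩,h3⟩|⟨⟨h1,h2⟩,h3⟩) <;> tauto
          · rintro (rfl|rfl)
            · exact Or.inl ⟨⟨hxy.symm, hy⟩, fun h => absurd rfl h.1⟩
            · exact Or.inr ⟨⟨hxy, hx⟩, fun h => absurd rfl h.1⟩
        rw [this]
        exact le_trans (Finset.card_insert_le _ _) (by simp)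
  constructor
  · refine ⟨hface, ?_⟩
    rintro τ ⟨-, hτF, hτd⟩ hστ
    apply Finset.Subset.antisymm _ hστ
    intro B hB
    obtain ⟨hBsub, hBcard⟩ := hτF B hB
    have hd2 : ∀ x ∈ S, ((S.erase x) \ B).card ≤ 1 := by
      intro x hx
      apply sdiff_le_one _ (hτd _ (hστ (mem_LSimp.mpr ⟨x, hx, rfl⟩)) B hB)
      rw [Finset.card_erase_of_mem hx, hBcard]; omega
    have hSB : (S \ B).card ≤ 1 := by
      by_contra hc
      push_neg at hc
      obtain ⟨u, hu, v, hv, huv⟩ := Finset.one_lt_card.mp hc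
      have : (S \ ({u, v} : Finset ℕ)).Nonempty := by
        rw [← Finset.card_pos]
        have h1 : (S \ {u, v}).card ≥ S.card - 2 := by
          have h0 := Finset.card_sdiff_add_card_eq_card
            (Finset.inter_subset_left : S ∩ {u,v} ⊆ S)
          have h2 : (S ∩ {u, v}).card ≤ 2 :=
            le_trans (Finset.card_le_card Finset.inter_subset_right)
              (le_trans (Finset.card_insert_le _ _) (by simp))
          have h3 : S \ (S ∩ {u,v}) = S \ {u,v} := by
            ext a; simp only [Finset.mem_sdiff, Finset.mem_inter]; tauto
          rw [h3] at h0
          omega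
        omega
      obtain ⟨x, hx⟩ := this
      obtain ⟨hxS, hxuv⟩ := Finset.mem_sdiff.mp hx
      have hxu : x ≠ u := fun h => hxuv (by simp [h])
      have hxv : x ≠ v := fun h => hxuv (by simp [h])
      have hle := hd2 x hxS
      have hmem' : ∀ w ∈ S \ B, w ≠ x → w ∈ (S.erase x) \ B := by
        intro w hw hwx
        rw [Finset.mem_sdiff] at hw ⊢
        exact ⟨Finset.mem_erase.mpr ⟨hwx, hw.1⟩, hw.2⟩
      have h1 : u ∈ (S.erase x) \ B := hmem' u hu (fun h => hxu h.symm)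
      have h2 : v ∈ (S.erase x) \ B := hmem' v hv (fun h => hxv h.symm)
      have := Finset.one_lt_card.mpr ⟨u, h1, v, h2, huv⟩
      omega
    have hBS : B ⊆ S := by
      have h1 : (S ∩ B).card ≥ n := by
        have h0 := Finset.card_sdiff_add_card_eq_card
          (Finset.inter_subset_left : S ∩ B ⊆ S)
        have h3 : S \ (S ∩ B) = S \ B := by
          ext a; simp only [Finset.mem_sdiff, Finset.mem_inter]; tauto
        rw [h3] at h0
        omega
      have h2 : (S ∩ B).card ≤ B.card := Finset.card_le_card Finset.inter_subset_right
      have : S ∩ B = B := Finset.eq_of_subset_of_card_le Finset.inter_subset_right (by omega)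
      intro a ha
      exact Finset.mem_inter.mp (this ▸ ha) |>.1
    have hBS1 : (S \ B).card = 1 := by rw [Finset.card_sdiff_of_subset hBS, hBcard]; omega
    obtain ⟨x, hx⟩ := Finset.card_eq_one.mp hBS1
    have hxS : x ∈ S := (Finset.mem_sdiff.mp (hx ▸ Finset.mem_singleton_self x)).1
    apply mem_LSimp.mpr
    refine ⟨x, hxS, ?_⟩
    have h1 : S \ (S \ B) = B := Finset.sdiff_sdiff_eq_self hBS
    rw [hx] at h1
    rw [← h1, Finset.erase_eq]
  · rw [LSimp, Finset.card_image_of_injOn, hcard]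
    intro x hx y hy hxy
    by_contra hne
    have hxy' : S.erase x = S.erase y := hxy
    have h2 : x ∈ S.erase y := Finset.mem_erase.mpr ⟨hne, hx⟩
    rw [← hxy'] at h2
    exact (Finset.mem_erase.mp h2).1 rfl

/-- For `m ≥ n+2`, `n ≥ 2`, and `i_1 < i_2 < … < i_{n+1}` in `[m]`,
`N[i_1, …, i_{n-1}]` is a maximal simplex of dimension `m - n` and `L[i_1, …, i_{n+1}]`
is a maximal simplex of dimension `n` in `VR(F_n^m, 2)`. -/
theorem stmt4 (m n : ℕ) (hn : 2 ≤ n) (hm : n + 2 ≤ m)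
    (i : Fin (n + 1) → ℕ) (hmono : StrictMono i)
    (hmem : ∀ j, i j ∈ Finset.Icc 1 m) :
    AbsSC.IsFacet (VRc (Fnm m n) 2)
      (NSimp m (Finset.image (fun j : Fin (n - 1) => i (Fin.castLE (by omega) j)) Finset.univ)) ∧
    (NSimp m (Finset.image (fun j : Fin (n - 1) => i (Fin.castLE (by omega) j))
        Finset.univ)).card = m - n + 1 ∧
    AbsSC.IsFacet (VRc (Fnm m n) 2) (LSimp (Finset.image i Finset.univ)) ∧
    (LSimp (Finset.image i Finset.univ)).card = n + 1 := by
  set C := Finset.image (fun j : Fin (n - 1) => i (Fin.castLE (by omega) j)) Finset.univ with hC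
  have hCcard : C.card + 1 = n := by
    rw [hC, Finset.card_image_of_injective _
      (fun a b hab => Fin.castLE_injective _ (hmono.injective hab)), Finset.card_univ,
      Fintype.card_fin]
    omega
  have hCsub : C ⊆ Finset.Icc 1 m := by
    rw [hC]
    intro a ha
    obtain ⟨j, _, rfl⟩ := Finset.mem_image.mp ha
    exact hmem _
  have hScard : (Finset.image i Finset.univ).card = n + 1 := by
    rw [Finset.card_image_of_injective _ hmono.injective, Finset.card_univ, Fintype.card_fin]
  have hSsub : Finset.image i Finset.univ ⊆ Finset.Icc 1 m := by
    intro a ha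
    obtain ⟨j, _, rfl⟩ := Finset.mem_image.mp ha
    exact hmem _
  obtain ⟨hN1, hN2⟩ := N_facet m n (by omega) hm C hCsub hCcard
  obtain ⟨hL1, hL2⟩ := L_facet m n hn _ hSsub hScard
  exact ⟨hN1, hN2, hL1, hL2⟩
end

section
/- Fix n, m ∈ ℕ with 1 < n < m. Every maximal simplex σ of the Vietoris–Rips complex VR(F_n^m, 2) is either of the form N[i_1, …, i_{n-1}] or of the form L[i_1, …, i_{n+1}] for some i_1 < i_2 < … < i_{n+1} in [m]. -/
open Finset

lemma vrc_pair_card {m n : ℕ} {σ : Finset (Finset ℕ)}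
    (hmem : ∀ A ∈ σ, A ∈ Fnm m n)
    (hdist : ∀ A ∈ σ, ∀ B ∈ σ, (symmDiff A B).card ≤ 2) :
    ∀ X ∈ σ, ∀ Y ∈ σ, X ≠ Y → (X \ Y).card = 1 ∧ (Y \ X).card = 1 := by
  intro X hX Y hY hne
  have hcX : X.card = n := (hmem X hX).2
  have hcY : Y.card = n := (hmem Y hY).2
  have hd := hdist X hX Y hY
  have h1 : (symmDiff X Y).card = (X \ Y).card + (Y \ X).card := by
    rw [symmDiff_def, Finset.sup_eq_union,
      Finset.card_union_of_disjoint disjoint_sdiff_sdiff]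
  have h2 : (X \ Y).card + (X ∩ Y).card = X.card := Finset.card_sdiff_add_card_inter X Y
  have h3 : (Y \ X).card + (Y ∩ X).card = Y.card := Finset.card_sdiff_add_card_inter Y X
  have h4 : (X ∩ Y).card = (Y ∩ X).card := by rw [Finset.inter_comm]
  by_cases h0 : (X \ Y).card = 0
  · exact absurd (Finset.eq_of_subset_of_card_le
      (Finset.sdiff_eq_empty_iff_subset.mp (Finset.card_eq_zero.mp h0)) (by omega)) hne
  · omega

lemma nsimp_face {m n : ℕ} (h1 : 1 ≤ n) (h2 : n ≤ m) (C : Finset ℕ)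
    (hCs : C ⊆ Finset.Icc 1 m) (hCc : C.card = n - 1) :
    NSimp m C ∈ (VRc (Fnm m n) 2).faces := by
  have hIm : (Finset.Icc 1 m).card = m := by rw [Nat.card_Icc]; omega
  have hnot : ¬ Finset.Icc 1 m ⊆ C := fun h => by
    have := Finset.card_le_card h; omega
  refine ⟨?_, ?_, ?_⟩
  · exact (Finset.sdiff_nonempty.mpr hnot).image _
  · intro A hA
    obtain ⟨x, hx, rfl⟩ := Finset.mem_image.mp hA
    obtain ⟨hxm, hxC⟩ := Finset.mem_sdiff.mp hx
    exact ⟨Finset.insert_subset hxm hCs, by rw [Finset.card_insert_of_notMem hxC]; omega⟩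
  · intro A hA B hB
    obtain ⟨x, hx, rfl⟩ := Finset.mem_image.mp hA
    obtain ⟨y, hy, rfl⟩ := Finset.mem_image.mp hB
    have hsub : symmDiff (insert x C) (insert y C) ⊆ {x, y} := by
      rw [symmDiff_def, Finset.sup_eq_union]
      intro z hz
      rcases Finset.mem_union.mp hz with hz | hz <;>
        obtain ⟨hz1, hz2⟩ := Finset.mem_sdiff.mp hz <;>
        rcases Finset.mem_insert.mp hz1 with rfl | hzC <;>
        simp_all [Finset.mem_insert]
    calc (symmDiff (insert x C) (insert y C)).card ≤ ({x, y} : Finset ℕ).card :=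
          Finset.card_le_card hsub
      _ ≤ 2 := (Finset.card_insert_le _ _).trans (by simp)

lemma lsimp_face {m n : ℕ} (S : Finset ℕ) (hSs : S ⊆ Finset.Icc 1 m)
    (hSc : S.card = n + 1) : LSimp S ∈ (VRc (Fnm m n) 2).faces := by
  have hSne : S.Nonempty := Finset.card_pos.mp (by omega)
  refine ⟨hSne.image _, ?_, ?_⟩
  · intro A hA
    obtain ⟨x, hx, rfl⟩ := Finset.mem_image.mp hA
    exact ⟨(Finset.erase_subset _ _).trans hSs, by rw [Finset.card_erase_of_mem hx]; omega⟩
  · intro A hA B hB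
    obtain ⟨x, hx, rfl⟩ := Finset.mem_image.mp hA
    obtain ⟨y, hy, rfl⟩ := Finset.mem_image.mp hB
    have hsub : symmDiff (S.erase x) (S.erase y) ⊆ {x, y} := by
      rw [symmDiff_def, Finset.sup_eq_union]
      intro z hz
      rcases Finset.mem_union.mp hz with hz | hz <;>
        obtain ⟨hz1, hz2⟩ := Finset.mem_sdiff.mp hz <;>
        obtain ⟨hzne, hzS⟩ := Finset.mem_erase.mp hz1 <;>
        simp_all [Finset.mem_erase, Finset.mem_insert]
    calc (symmDiff (S.erase x) (S.erase y)).card ≤ ({x, y} : Finset ℕ).card :=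
          Finset.card_le_card hsub
      _ ≤ 2 := (Finset.card_insert_le _ _).trans (by simp)


/-- For `1 < n < m`, every maximal simplex of `VR(F_n^m, 2)` is of the form
`N[C]` for an `(n-1)`-subset `C` of `[m]`, or `L[S]` for an `(n+1)`-subset `S` of `[m]`. -/
theorem stmt5 (m n : ℕ) (h1 : 1 < n) (h2 : n < m)
    (σ : Finset (Finset ℕ)) (hσ : AbsSC.IsFacet (VRc (Fnm m n) 2) σ) :
    (∃ C : Finset ℕ, C ⊆ Finset.Icc 1 m ∧ C.card = n - 1 ∧ σ = NSimp m C) ∨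
    (∃ S : Finset ℕ, S ⊆ Finset.Icc 1 m ∧ S.card = n + 1 ∧ σ = LSimp S) := by
  obtain ⟨⟨hne, hmem, hdist⟩, hmax⟩ := hσ
  have pair := vrc_pair_card hmem hdist
  by_cases hsing : ∀ X ∈ σ, ∀ Y ∈ σ, X = Y
  · obtain ⟨A, hA⟩ := hne
    have hAcard : A.card = n := (hmem A hA).2
    obtain ⟨a, ha⟩ : A.Nonempty := Finset.card_pos.mp (by omega)
    set C := A.erase a with hCdef
    have hCs : C ⊆ Finset.Icc 1 m := (Finset.erase_subset _ _).trans (hmem A hA).1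
    have hCc : C.card = n - 1 := by rw [hCdef, Finset.card_erase_of_mem ha, hAcard]
    have hface := nsimp_face (by omega) (by omega) C hCs hCc
    have hsub : σ ⊆ NSimp m C := by
      intro X hX
      have hXA : X = A := hsing X hX A hA
      refine Finset.mem_image.mpr ⟨a, Finset.mem_sdiff.mpr
        ⟨(hmem A hA).1 ha, Finset.notMem_erase a A⟩, ?_⟩
      rw [hXA, hCdef, Finset.insert_erase ha]
    exact Or.inl ⟨C, hCs, hCc, (hmax _ hface hsub).symm⟩
  · push_neg at hsing
    obtain ⟨A, hA, B, hB, hAB⟩ := hsing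
    have hAcard : A.card = n := (hmem A hA).2
    have hBcard : B.card = n := (hmem B hB).2
    set D := A ∩ B with hDdef
    set S := A ∪ B with hSdef
    have hpAB := pair A hA B hB hAB
    have hp1 : (A \ B).card = 1 := hpAB.1
    have hDcard : D.card = n - 1 := by
      have h := Finset.card_sdiff_add_card_inter A B
      rw [← hDdef] at h
      omega
    have hScard : S.card = n + 1 := by
      have h := Finset.card_union_add_card_inter A B
      rw [← hDdef, ← hSdef] at h
      omega
    have hSsub : S ⊆ Finset.Icc 1 m := Finset.union_subset (hmem A hA).1 (hmem B hB).1
    have hDS : D ⊆ S := Finset.inter_subset_left.trans Finset.subset_union_left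
    by_cases hD : ∀ X ∈ σ, D ⊆ X
    · have hDsub : D ⊆ Finset.Icc 1 m := Finset.inter_subset_left.trans (hmem A hA).1
      have hface := nsimp_face (le_of_lt h1) (le_of_lt h2) D hDsub hDcard
      have hsub : σ ⊆ NSimp m D := by
        intro X hX
        have hDX := hD X hX
        have hXcard : X.card = n := (hmem X hX).2
        have hc1 : (X \ D).card = 1 := by rw [Finset.card_sdiff_of_subset hDX]; omega
        obtain ⟨x, hx⟩ := Finset.card_eq_one.mp hc1
        have hxX : x ∈ X \ D := hx ▸ Finset.mem_singleton_self x
        have hXeq : X = insert x D := by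
          have h' : D ∪ X \ D = X := Finset.union_sdiff_of_subset hDX
          rw [hx] at h'
          rw [← h', Finset.union_comm, Finset.insert_eq]
        refine Finset.mem_image.mpr ⟨x, Finset.mem_sdiff.mpr
          ⟨(hmem X hX).1 (Finset.mem_sdiff.mp hxX).1, (Finset.mem_sdiff.mp hxX).2⟩, hXeq.symm⟩
      exact Or.inl ⟨D, hDsub, hDcard, (hmax _ hface hsub).symm⟩
    · push_neg at hD
      obtain ⟨C, hC, hDC⟩ := hD
      have key : ∀ X ∈ σ, ¬ D ⊆ X → ∃ e ∈ D, X = S.erase e := by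
        intro X hX hnsub
        obtain ⟨e, heD, heX⟩ := Finset.not_subset.mp hnsub
        have heA : e ∈ A := (Finset.mem_inter.mp heD).1
        have heB : e ∈ B := (Finset.mem_inter.mp heD).2
        have heS : e ∈ S := Finset.mem_union_left _ heA
        have hXA : X ≠ A := fun h => heX (h ▸ heA)
        have hXB : X ≠ B := fun h => heX (h ▸ heB)
        have hAXs : A \ X = {e} := by
          obtain ⟨a, ha⟩ := Finset.card_eq_one.mp (pair X hX A hA hXA).2
          have he' : e ∈ A \ X := Finset.mem_sdiff.mpr ⟨heA, heX⟩
          rw [ha] at he' ⊢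
          rw [Finset.mem_singleton.mp he']
        have hBXs : B \ X = {e} := by
          obtain ⟨b, hb⟩ := Finset.card_eq_one.mp (pair X hX B hB hXB).2
          have he' : e ∈ B \ X := Finset.mem_sdiff.mpr ⟨heB, heX⟩
          rw [hb] at he' ⊢
          rw [Finset.mem_singleton.mp he']
        have hsub : S.erase e ⊆ X := by
          intro z hz
          obtain ⟨hzne, hzS⟩ := Finset.mem_erase.mp hz
          by_contra hzX
          rcases Finset.mem_union.mp hzS with hzA | hzB
          · exact hzne (Finset.mem_singleton.mp (hAXs ▸ Finset.mem_sdiff.mpr ⟨hzA, hzX⟩))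
          · exact hzne (Finset.mem_singleton.mp (hBXs ▸ Finset.mem_sdiff.mpr ⟨hzB, hzX⟩))
        have hXcard : X.card = n := (hmem X hX).2
        have heq : S.erase e = X := Finset.eq_of_subset_of_card_le hsub
          (by rw [Finset.card_erase_of_mem heS]; omega)
        exact ⟨e, heD, heq.symm⟩
      obtain ⟨d, hdD, hCeq⟩ := key C hC hDC
      have hsubS : ∀ X ∈ σ, X ⊆ S := by
        intro X hX
        by_cases hDX : D ⊆ X
        · have hXcard : X.card = n := (hmem X hX).2
          have hc1 : (X \ D).card = 1 := by rw [Finset.card_sdiff_of_subset hDX]; omega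
          obtain ⟨x, hx⟩ := Finset.card_eq_one.mp hc1
          have hxX : x ∈ X := (Finset.mem_sdiff.mp (hx ▸ Finset.mem_singleton_self x)).1
          have hXeq : X = insert x D := by
            have h' : D ∪ X \ D = X := Finset.union_sdiff_of_subset hDX
            rw [hx] at h'
            rw [← h', Finset.union_comm, Finset.insert_eq]
          by_cases hxS : x ∈ S
          · rw [hXeq]; exact Finset.insert_subset hxS hDS
          · exfalso
            have hxC : x ∉ C := fun h => hxS (Finset.erase_subset _ _ (hCeq ▸ h))
            have hdX : d ∈ X := hDX hdD
            have hdC : d ∉ C := hCeq ▸ Finset.notMem_erase d S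
            have hXC : X ≠ C := fun h => hxC (h ▸ hxX)
            have hxd : x ≠ d := fun h => hxS (h ▸ hDS hdD)
            have hsub2 : ({x, d} : Finset ℕ) ⊆ X \ C := by
              intro z hz
              rcases Finset.mem_insert.mp hz with rfl | hz
              · exact Finset.mem_sdiff.mpr ⟨hxX, hxC⟩
              · rw [Finset.mem_singleton.mp hz]
                exact Finset.mem_sdiff.mpr ⟨hdX, hdC⟩
            have hcard2 : ({x, d} : Finset ℕ).card = 2 := Finset.card_pair hxd
            have h5 := Finset.card_le_card hsub2
            have h6 := (pair X hX C hC hXC).1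
            omega
        · obtain ⟨e, _, hXe⟩ := key X hX hDX
          rw [hXe]; exact Finset.erase_subset _ _
      have hface := lsimp_face S hSsub hScard
      have hsub : σ ⊆ LSimp S := by
        intro X hX
        have hXS := hsubS X hX
        have hXcard : X.card = n := (hmem X hX).2
        have hc1 : (S \ X).card = 1 := by rw [Finset.card_sdiff_of_subset hXS]; omega
        obtain ⟨x, hx⟩ := Finset.card_eq_one.mp hc1
        have hxS : x ∈ S \ X := hx ▸ Finset.mem_singleton_self x
        obtain ⟨hxS2, hxX⟩ := Finset.mem_sdiff.mp hxS
        have hXsub : X ⊆ S.erase x := fun z hz =>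
          Finset.mem_erase.mpr ⟨fun h => hxX (h ▸ hz), hXS hz⟩
        have heq : X = S.erase x := Finset.eq_of_subset_of_card_le hXsub
          (by rw [Finset.card_erase_of_mem hxS2]; omega)
        exact Finset.mem_image.mpr ⟨x, hxS2, heq.symm⟩
      exact Or.inr ⟨S, hSsub, hScard, (hmax _ hface hsub).symm⟩
end

section
/- Fix n, m ∈ ℕ with 1 < n < m. Let k ≥ 2 and let {A_1, A_2, …, A_{k+1}} be a k-simplex in VR(F_n^m, 2) such that |A_1 ∩ A_2 ∩ ⋯ ∩ A_{k+1}| < n − 1. Then the only maximal simplex of VR(F_n^m, 2) containing {A_1, …, A_{k+1}} as a face is L[A_1 ∪ A_2] (the collection of all n-element subsets of the (n+1)-element set A_1 ∪ A_2). -/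
open Finset

lemma sd_card' (A B : Finset ℕ) : (symmDiff A B).card = (A \ B).card + (B \ A).card := by
  rw [symmDiff_def]
  exact card_union_of_disjoint disjoint_sdiff_sdiff

lemma near1 (n : ℕ) (A B : Finset ℕ) (hA : A.card = n) (hB : B.card = n)
    (hd : (symmDiff A B).card ≤ 2) (hne : A ≠ B) :
    (A \ B).card = 1 ∧ (B \ A).card = 1 := by
  have h1 := Finset.card_inter_add_card_sdiff A B
  have h2 := Finset.card_inter_add_card_sdiff B A
  have h3 := sd_card' A B
  have h4 : (A \ B).card ≠ 0 := by
    intro h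
    exact hne (Finset.eq_of_subset_of_card_le
      ((Finset.sdiff_eq_empty_iff_subset).mp (Finset.card_eq_zero.mp h)) (by omega))
  rw [Finset.inter_comm] at h2
  omega

lemma near_inter (n : ℕ) (A B : Finset ℕ) (hA : A.card = n) (hB : B.card = n)
    (hd : (symmDiff A B).card ≤ 2) (hne : A ≠ B) :
    (A ∩ B).card + 1 = n := by
  have h1 := Finset.card_inter_add_card_sdiff A B
  have := (near1 n A B hA hB hd hne).1
  omega

lemma erase_subset_of' (B A : Finset ℕ) (x : ℕ) (h : B \ A = {x}) : B.erase x ⊆ A := by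
  intro z hz
  rw [Finset.mem_erase] at hz
  by_contra hzA
  have : z ∈ B \ A := Finset.mem_sdiff.mpr ⟨hz.2, hzA⟩
  rw [h, Finset.mem_singleton] at this
  exact hz.1 this

/-- Trichotomy: a third n-set near A0 and A1 is either inside the union or equals
`insert x (A0 ∩ A1)` for some outside x. -/
lemma trich (n : ℕ) (A0 A1 B : Finset ℕ) (h0 : A0.card = n) (h1 : A1.card = n)
    (hB : B.card = n) (hne01 : A0 ≠ A1) (hd01 : (symmDiff A0 A1).card ≤ 2)
    (hd0 : (symmDiff B A0).card ≤ 2) (hd1 : (symmDiff B A1).card ≤ 2) :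
    B ⊆ A0 ∪ A1 ∨ ∃ x, x ∉ A0 ∪ A1 ∧ B = insert x (A0 ∩ A1) := by
  by_cases hsub : B ⊆ A0 ∪ A1
  · exact Or.inl hsub
  · right
    obtain ⟨x, hxB, hxS⟩ : ∃ x, x ∈ B ∧ x ∉ A0 ∪ A1 := by
      rw [Finset.subset_iff] at hsub; push_neg at hsub; exact hsub
    rw [Finset.mem_union] at hxS; push_neg at hxS
    refine ⟨x, by rw [Finset.mem_union]; push_neg; exact hxS, ?_⟩
    have hneB0 : B ≠ A0 := fun h => hxS.1 (h ▸ hxB)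
    have hneB1 : B ≠ A1 := fun h => hxS.2 (h ▸ hxB)
    have e0 : B \ A0 = {x} := by
      have hc := (near1 n B A0 hB h0 hd0 hneB0).1
      obtain ⟨y, hy⟩ := Finset.card_eq_one.mp hc
      have : x ∈ B \ A0 := Finset.mem_sdiff.mpr ⟨hxB, hxS.1⟩
      rw [hy, Finset.mem_singleton] at this
      rw [hy, this]
    have e1 : B \ A1 = {x} := by
      have hc := (near1 n B A1 hB h1 hd1 hneB1).1
      obtain ⟨y, hy⟩ := Finset.card_eq_one.mp hc
      have : x ∈ B \ A1 := Finset.mem_sdiff.mpr ⟨hxB, hxS.2⟩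
      rw [hy, Finset.mem_singleton] at this
      rw [hy, this]
    have hsub0 : B.erase x ⊆ A0 := erase_subset_of' B A0 x e0
    have hsub1 : B.erase x ⊆ A1 := erase_subset_of' B A1 x e1
    have hsubC : B.erase x ⊆ A0 ∩ A1 := Finset.subset_inter hsub0 hsub1
    have hcard : (A0 ∩ A1).card + 1 = n := near_inter n A0 A1 h0 h1 hd01 hne01
    have hcardE : (B.erase x).card = (A0 ∩ A1).card := by
      rw [Finset.card_erase_of_mem hxB]; omega
    have heq : B.erase x = A0 ∩ A1 := Finset.eq_of_subset_of_card_le hsubC (by omega)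
    rw [← heq, Finset.insert_erase hxB]

/-- If `B = insert x C` with `x` outside everything, any n-set `A'` avoiding `x`
and near `B` must contain `C`. -/
lemma push (n : ℕ) (C : Finset ℕ) (x : ℕ) (hC : C.card + 1 = n) (hx : x ∉ C)
    (A' : Finset ℕ) (hA' : A'.card = n) (hxA' : x ∉ A')
    (hd : (symmDiff A' (insert x C)).card ≤ 2) : C ⊆ A' := by
  have hBcard : (insert x C).card = n := by rw [Finset.card_insert_of_notMem hx]; omega
  have hne : A' ≠ insert x C := fun h => hxA' (h ▸ Finset.mem_insert_self x C)
  have hint := near_inter n A' (insert x C) hA' hBcard hd hne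
  have hsub : A' ∩ insert x C ⊆ C := by
    intro z hz
    rw [Finset.mem_inter, Finset.mem_insert] at hz
    rcases hz.2 with rfl | h
    · exact absurd hz.1 hxA'
    · exact h
  have : A' ∩ insert x C = C := Finset.eq_of_subset_of_card_le hsub (by omega)
  rw [← this]
  exact Finset.inter_subset_left

lemma mem_LSimp' (S B : Finset ℕ) (hB : B ⊆ S) (h : B.card + 1 = S.card) :
    B ∈ S.image (fun x => S.erase x) := by
  have hcard : (S \ B).card = 1 := by
    have := Finset.card_sdiff_of_subset hB; omega
  obtain ⟨y, hy⟩ := Finset.card_eq_one.mp hcard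
  have hyS : y ∈ S ∧ y ∉ B := by
    have : y ∈ S \ B := hy ▸ Finset.mem_singleton_self y
    exact Finset.mem_sdiff.mp this
  rw [Finset.mem_image]
  refine ⟨y, hyS.1, ?_⟩
  have hsub : B ⊆ S.erase y := fun z hz =>
    Finset.mem_erase.mpr ⟨fun h' => hyS.2 (h' ▸ hz), hB hz⟩
  exact (Finset.eq_of_subset_of_card_le hsub (by rw [Finset.card_erase_of_mem hyS.1]; omega)).symm

/-- For `1 < n < m`, `k ≥ 2`, if `{A_1, …, A_{k+1}}` is a `k`-simplex of
`VR(F_n^m, 2)` with `|A_1 ∩ ⋯ ∩ A_{k+1}| < n - 1`, then the only maximal simplex containing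
it is `L[A_1 ∪ A_2]`. -/
theorem stmt6 (m n : ℕ) (h1 : 1 < n) (h2 : n < m) (k : ℕ) (hk : 2 ≤ k)
    (A : Fin (k + 1) → Finset ℕ) (hinj : Function.Injective A)
    (hσ : Finset.image A Finset.univ ∈ (VRc (Fnm m n) 2).faces)
    (hcap : (Finset.univ.inf' Finset.univ_nonempty A).card < n - 1) :
    AbsSC.IsFacet (VRc (Fnm m n) 2) (LSimp (A 0 ∪ A 1)) ∧
    Finset.image A Finset.univ ⊆ LSimp (A 0 ∪ A 1) ∧
    (∀ τ, AbsSC.IsFacet (VRc (Fnm m n) 2) τ → Finset.image A Finset.univ ⊆ τ →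
      τ = LSimp (A 0 ∪ A 1)) := by
  
  classical
  obtain ⟨hne, hF, hdist⟩ := hσ
  have hFi : ∀ i, A i ∈ Fnm m n := fun i =>
    hF _ (Finset.mem_image_of_mem A (Finset.mem_univ i))
  have hcardA : ∀ i, (A i).card = n := fun i => (hFi i).2
  have hsubA : ∀ i, A i ⊆ Finset.Icc 1 m := fun i => (hFi i).1
  have hdA : ∀ i j, (symmDiff (A i) (A j)).card ≤ 2 := fun i j =>
    hdist _ (Finset.mem_image_of_mem A (Finset.mem_univ i)) _
      (Finset.mem_image_of_mem A (Finset.mem_univ j))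
  have h01 : (0 : Fin (k+1)) ≠ 1 := by
    intro h
    have h' := congrArg Fin.val h
    rw [Fin.val_zero, Fin.val_one', Nat.mod_eq_of_lt (by omega)] at h'
    omega
  have hA01 : A 0 ≠ A 1 := fun h => h01 (hinj h)
  set S := A 0 ∪ A 1 with hSdef
  set C := A 0 ∩ A 1 with hCdef
  have hCcard : C.card + 1 = n := near_inter n _ _ (hcardA 0) (hcardA 1) (hdA 0 1) hA01
  have hScard : S.card = n + 1 := by
    have h := Finset.card_union_add_card_inter (A 0) (A 1)
    rw [hcardA 0, hcardA 1, ← hSdef, ← hCdef] at h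
    omega
  have hSIcc : S ⊆ Finset.Icc 1 m := Finset.union_subset (hsubA 0) (hsubA 1)
  -- an outside-element configuration leads to contradiction with hcap
  have noout : ∀ x, x ∉ S → ∀ B : Finset ℕ, B = insert x C →
      (∀ i, (symmDiff (A i) B).card ≤ 2) → False := by
    intro x hxS B hBdef hd
    have hCsub : ∀ i, C ⊆ A i := by
      intro i
      rcases trich n (A 0) (A 1) (A i) (hcardA 0) (hcardA 1) (hcardA i) hA01
          (hdA 0 1) (hdA i 0) (hdA i 1) with hin | ⟨x', hx', hAi⟩
      · -- A i ⊆ S, so x ∉ A i, apply push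
        have hxAi : x ∉ A i := fun h => hxS (hin h)
        exact push n C x hCcard (fun h => hxS (Finset.mem_union_left _
          (Finset.mem_inter.mp h).1)) (A i) (hcardA i) hxAi (hBdef ▸ hd i)
      · rw [hAi]; exact Finset.subset_insert _ _
    have hCinf : C ⊆ Finset.univ.inf' Finset.univ_nonempty A :=
      Finset.le_inf' _ _ (fun i _ => hCsub i)
    have := Finset.card_le_card hCinf
    omega
  -- any n-set near all the A i lies in S
  have key : ∀ B : Finset ℕ, B.card = n → (∀ i, (symmDiff B (A i)).card ≤ 2) → B ⊆ S := by
    intro B hBcard hd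
    rcases trich n (A 0) (A 1) B (hcardA 0) (hcardA 1) hBcard hA01
        (hdA 0 1) (hd 0) (hd 1) with hin | ⟨x, hx, hBdef⟩
    · exact hin
    · exact absurd (noout x hx B hBdef (fun i => by rw [symmDiff_comm]; exact hd i)) not_false
  have allin : ∀ i, A i ⊆ S := fun i => key (A i) (hcardA i) (fun j => hdA i j)
  have memL : ∀ B : Finset ℕ, B ⊆ S → B.card = n → B ∈ LSimp S := by
    intro B hBS hBcard
    exact mem_LSimp' S B hBS (by omega)
  have hLmem : ∀ B ∈ LSimp S, B ⊆ S ∧ B.card = n := by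
    intro B hB
    obtain ⟨y, hyS, rfl⟩ := Finset.mem_image.mp hB
    exact ⟨Finset.erase_subset _ _, by rw [Finset.card_erase_of_mem hyS]; omega⟩
  have σsub : Finset.image A Finset.univ ⊆ LSimp S := by
    intro B hB
    obtain ⟨i, _, rfl⟩ := Finset.mem_image.mp hB
    exact memL (A i) (allin i) (hcardA i)
  have hSne : S.Nonempty := Finset.card_pos.mp (by omega)
  have Lface : LSimp S ∈ (VRc (Fnm m n) 2).faces := by
    refine ⟨hSne.image _, ?_, ?_⟩
    · intro B hB
      exact ⟨(hLmem B hB).1.trans hSIcc, (hLmem B hB).2⟩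
    · intro B hB B' hB'
      obtain ⟨y, hyS, rfl⟩ := Finset.mem_image.mp hB
      obtain ⟨y', hyS', rfl⟩ := Finset.mem_image.mp hB'
      have hsub2 : symmDiff (S.erase y) (S.erase y') ⊆ {y', y} := by
        intro z hz
        rw [symmDiff_def, Finset.sup_eq_union, Finset.mem_union] at hz
        rcases hz with hz | hz <;> rw [Finset.mem_sdiff, Finset.mem_erase] at hz <;>
          rw [Finset.mem_insert, Finset.mem_singleton]
        · left; by_contra h; exact hz.2 (Finset.mem_erase.mpr ⟨h, hz.1.2⟩)
        · right; by_contra h; exact hz.2 (Finset.mem_erase.mpr ⟨h, hz.1.2⟩)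
      calc (symmDiff (S.erase y) (S.erase y')).card ≤ ({y', y} : Finset ℕ).card :=
            Finset.card_le_card hsub2
        _ ≤ 2 := (Finset.card_insert_le _ _).trans (by simp)
  have subL : ∀ τ ∈ (VRc (Fnm m n) 2).faces, (∀ i, A i ∈ τ) → τ ⊆ LSimp S := by
    rintro τ ⟨τne, τF, τd⟩ hAτ B hB
    have hBcard : B.card = n := (τF B hB).2
    have hBS : B ⊆ S := key B hBcard (fun i => τd B hB (A i) (hAτ i))
    exact memL B hBS hBcard
  refine ⟨⟨Lface, ?_⟩, σsub, ?_⟩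
  · intro τ hτ hLτ
    have hAτ : ∀ i, A i ∈ τ := fun i => hLτ (σsub (Finset.mem_image_of_mem A (Finset.mem_univ i)))
    exact Finset.Subset.antisymm (subL τ hτ hAτ) hLτ
  · rintro τ ⟨hτface, hτmax⟩ hστ
    have hAτ : ∀ i, A i ∈ τ := fun i => hστ (Finset.mem_image_of_mem A (Finset.mem_univ i))
    exact (hτmax (LSimp S) Lface (subL τ hτface hAτ)).symm
end

section
/- Let n < m be natural numbers, let S_1 = {A ⊆ [m] : |A| = n and 1 ∈ A}, and let L = VR(S_1, 2), a subcomplex of K = VR(F_n^m, 2). Then the star cluster SC_K(L) is homotopy equivalent to L. -/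
open Finset

/-!
Let `K = VR(F, 2)` and `L = VR(F_x, 2)`, where `F_x = {A ∈ F : x ∈ A}`. A face `σ` of the star
cluster that is not in `L` contains some `A` with `x ∉ A`; its cone points (the `v ∋ x` with
`σ ∪ {v} ∈ K`) are then pairwise at distance at most `2`, since `v ∆ w = (A ∆ v) ∆ (A ∆ w)` and `x`
cancels. So adding or removing a cone point does not change the set of cone points, and
`σ ↦ σ ∆ {apex σ}`, with `apex σ` the least cone point, pairs off the faces outside `L`. Removed in
decreasing order of `(|σ \ apex σ|, apex σ, σ \ apex σ)`, every pair is a free face with its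
coface, and each such elementary collapse is a deformation retraction of the realization: slide
the mass of the free face `τ` onto the remaining vertex `a` at equal rates until it vanishes at
a vertex of `τ`.
-/

namespace AbsSC

variable {V : Type}

/-- `K.space` is the subtype `{g // K.IsPoint g}`. -/
def IsPoint (K : AbsSC V) (g : V → ℝ) : Prop :=
  (∀ v, 0 ≤ g v) ∧ ∃ s ∈ K.faces, (∀ v, g v ≠ 0 → v ∈ s) ∧ ∑ v ∈ s, g v = 1

theorem ext {K L : AbsSC V} (h : K.faces = L.faces) : K = L := by
  cases K; cases L; cases h; rfl

theorem HEquiv.trans {W U : Type} {K : AbsSC V} {L : AbsSC W} {M : AbsSC U}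
    (hKL : K.HEquiv L) (hLM : L.HEquiv M) : K.HEquiv M :=
  ⟨hKL.some.trans hLM.some⟩

theorem sum_eq_one_of_support_subset {K : AbsSC V} (f : K.space) {t : Finset V}
    (ht : ∀ v ∉ t, f.1 v = 0) : ∑ v ∈ t, f.1 v = 1 := by
  classical
  obtain ⟨s, -, hs, hsum⟩ := f.2.2
  calc ∑ v ∈ t, f.1 v = ∑ v ∈ s ∪ t, f.1 v :=
        sum_subset subset_union_right fun v _ hv => ht v hv
    _ = ∑ v ∈ s, f.1 v :=
        (sum_subset subset_union_left fun v _ hv => by_contra fun h => hv (hs v h)).symm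
    _ = 1 := hsum

theorem continuous_inf' {K : AbsSC V} {τ : Finset V} (hτ : τ.Nonempty) :
    Continuous fun f : K.space => τ.inf' hτ f.1 :=
  Continuous.finset_inf'_apply hτ fun t _ => (continuous_apply t).comp continuous_subtype_val

variable [DecidableEq V]

def IsFreeFace (K : AbsSC V) (τ : Finset V) (a : V) : Prop :=
  ∀ ρ ∈ K.faces, τ ⊆ ρ → ρ = τ ∨ ρ = insert a τ

def collapse (K : AbsSC V) (τ : Finset V) (a : V) (hfree : K.IsFreeFace τ a) : AbsSC V where
  faces := K.faces \ {τ, insert a τ}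
  not_empty_mem h := K.not_empty_mem h.1
  down_closed := by
    rintro s ⟨hs, hsτ⟩ t hts htne
    refine ⟨K.down_closed s hs t hts htne, fun ht => hsτ (hfree s hs ?_)⟩
    rcases ht with rfl | rfl
    exacts [hts, (subset_insert a τ).trans hts]

section Collapse

variable {K : AbsSC V} {τ : Finset V} {a : V}

def flow (τ : Finset V) (a v : V) : ℝ := if v = a then τ.card else if v ∈ τ then -1 else 0

theorem flow_eq_zero {v : V} (hv : v ∉ insert a τ) : flow τ a v = 0 := by
  rw [mem_insert, not_or] at hv
  simp [flow, hv.1, hv.2]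

theorem flow_eq_neg_one (ha : a ∉ τ) {v : V} (hv : v ∈ τ) : flow τ a v = -1 := by
  simp [flow, hv, ne_of_mem_of_not_mem hv ha]

theorem sum_flow (ha : a ∉ τ) : ∑ v ∈ insert a τ, flow τ a v = 0 := by
  rw [sum_insert ha, sum_congr rfl fun v hv => flow_eq_neg_one ha hv]
  simp [flow]

def slide (τ : Finset V) (a : V) (c : ℝ) (g : V → ℝ) (v : V) : ℝ := g v + c * flow τ a v

theorem slide_zero (g : V → ℝ) : slide τ a 0 g = g := by
  ext v; simp [slide]

theorem continuous_slide {X : Type*} [TopologicalSpace X] {c : X → ℝ} {g : X → V → ℝ}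
    (hc : Continuous c) (hg : Continuous g) : Continuous fun x => slide τ a (c x) (g x) :=
  continuous_pi fun v => ((continuous_apply v).comp hg).add (hc.mul continuous_const)

theorem support_subset_of_inf'_pos (hτ : τ.Nonempty)
    (hfree : K.IsFreeFace τ a) (f : K.space)
    (hf : 0 < τ.inf' hτ f.1) : ∀ v ∉ insert a τ, f.1 v = 0 := by
  obtain ⟨s, hs, hsupp, -⟩ := f.2.2
  have hτs : τ ⊆ s := fun t ht => hsupp t (hf.trans_le (inf'_le _ ht)).ne'
  have hs' : s ⊆ insert a τ := by
    rcases hfree s hs hτs with rfl | rfl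
    exacts [subset_insert a s, subset_rfl]
  exact fun v hv => by_contra fun h => hv (hs' (hsupp v h))

theorem isPoint_slide (hτ : τ.Nonempty) (ha : a ∉ τ) (haτ : insert a τ ∈ K.faces)
    (hfree : K.IsFreeFace τ a) (f : K.space) {c : ℝ}
    (hc₀ : 0 ≤ c) (hc : c ≤ τ.inf' hτ f.1) : K.IsPoint (slide τ a c f.1) := by
  rcases (le_inf' hτ _ fun t _ => f.2.1 t).eq_or_lt with h0 | hpos
  · rw [le_antisymm (h0 ▸ hc) hc₀, slide_zero]
    exact f.2
  have hout := support_subset_of_inf'_pos hτ hfree f hpos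
  refine ⟨fun v => ?_, insert a τ, haτ, fun v hv => by_contra fun h => hv ?_, ?_⟩
  · unfold slide flow
    split_ifs with hva hvτ
    · exact add_nonneg (f.2.1 v) (mul_nonneg hc₀ (Nat.cast_nonneg _))
    · linarith [inf'_le f.1 hvτ]
    · simpa using f.2.1 v
  · simp [slide, hout v h, flow_eq_zero h]
  · simp only [slide, sum_add_distrib, ← mul_sum, sum_flow ha,
      sum_eq_one_of_support_subset f hout, mul_zero, add_zero]

theorem isPoint_collapse_of_apply_eq_zero
    (hfree : K.IsFreeFace τ a) {g : V → ℝ} (hg : K.IsPoint g)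
    {t₀ : V} (ht₀ : t₀ ∈ τ) (hgt₀ : g t₀ = 0) : (K.collapse τ a hfree).IsPoint g := by
  obtain ⟨hnn, s, hs, hsupp, hsum⟩ := hg
  have hsum' : ∑ v ∈ s.erase t₀, g v = 1 := (sum_erase s hgt₀).trans hsum
  have hne : s.erase t₀ ≠ ∅ := fun h => by simp [h] at hsum'
  have ht₀τ : t₀ ∈ insert a τ := mem_insert_of_mem ht₀
  refine ⟨hnn, s.erase t₀, ⟨K.down_closed s hs _ (erase_subset t₀ s) hne, ?_⟩, ?_, hsum'⟩
  · rintro (h | h) <;> exact notMem_erase t₀ s (h ▸ ‹_›)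
  · exact fun v hv => mem_erase.mpr ⟨fun h => hv (h ▸ hgt₀), hsupp v hv⟩

theorem inf'_eq_zero_of_collapse (hτ : τ.Nonempty)
    (hfree : K.IsFreeFace τ a) (f : (K.collapse τ a hfree).space) :
    τ.inf' hτ f.1 = 0 := by
  obtain ⟨s, ⟨hs, hsτ⟩, hsupp, -⟩ := f.2.2
  obtain ⟨t, ht, hts⟩ := not_subset.mp fun h => hsτ (hfree s hs h)
  exact le_antisymm ((inf'_le _ ht).trans (not_not.mp (mt (hsupp t) hts)).le)
    (le_inf' hτ _ fun t _ => f.2.1 t)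

theorem hEquiv_collapse (hτ : τ.Nonempty) (ha : a ∉ τ) (haτ : insert a τ ∈ K.faces)
    (hfree : K.IsFreeFace τ a) :
    K.HEquiv (K.collapse τ a hfree) := by
  have hpt (q : unitInterval × K.space) : K.IsPoint (slide τ a (q.1 * τ.inf' hτ q.2.1) q.2.1) :=
    have hm₀ : 0 ≤ τ.inf' hτ q.2.1 := le_inf' hτ _ fun t _ => q.2.2.1 t
    isPoint_slide hτ ha haτ hfree q.2 (mul_nonneg q.1.2.1 hm₀)
      (mul_le_of_le_one_left hm₀ q.1.2.2)
  -- the end of the slide kills the mass at a vertex `t₀` of `τ` where `f` is minimal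
  have hret (f : K.space) : (K.collapse τ a hfree).IsPoint (slide τ a (τ.inf' hτ f.1) f.1) := by
    obtain ⟨t₀, ht₀, hmin⟩ := exists_mem_eq_inf' hτ f.1
    refine isPoint_collapse_of_apply_eq_zero hfree (by simpa using hpt (1, f)) ht₀ ?_
    simp [slide, flow_eq_neg_one ha ht₀, hmin]
  let r : C(K.space, (K.collapse τ a hfree).space) :=
    ⟨fun f => ⟨_, hret f⟩,
      (continuous_slide (continuous_inf' hτ) continuous_subtype_val).subtype_mk _⟩
  let i : C((K.collapse τ a hfree).space, K.space) := incl Set.sdiff_subset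
  let H : ContinuousMap.Homotopy (ContinuousMap.id K.space) (i.comp r) :=
    { toFun := fun q => ⟨_, hpt q⟩
      continuous_toFun := (continuous_slide
        ((continuous_subtype_val.comp continuous_fst).mul
          ((continuous_inf' hτ).comp continuous_snd))
        (continuous_subtype_val.comp continuous_snd)).subtype_mk _
      map_zero_left := fun f => Subtype.ext (by simp [slide_zero])
      map_one_left := fun f => Subtype.ext (congrArg (slide τ a · f.1) (one_mul _)) }
  have hri : r.comp i = ContinuousMap.id _ := by
    ext f : 1
    apply Subtype.ext
    show slide τ a (τ.inf' hτ f.1) f.1 = f.1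
    rw [inf'_eq_zero_of_collapse hτ hfree f, slide_zero]
  exact ⟨⟨r, i, ⟨H.symm⟩, hri ▸ ContinuousMap.Homotopic.refl _⟩⟩

end Collapse

variable {ι : Type*} [LinearOrder ι]

def IsRankPairing (D : Set (Finset V)) (rank : Finset V → ι) : Prop :=
  (∀ ρ ∈ D, ∀ σ ∈ D, ρ ⊆ σ → rank ρ ≤ rank σ) ∧
  ∀ σ ∈ D, ∃ τ a, τ.Nonempty ∧ a ∉ τ ∧ {ρ | ρ ∈ D ∧ rank ρ = rank σ} = {τ, insert a τ}

theorem IsRankPairing.sep_ne {D : Set (Finset V)} {rank : Finset V → ι}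
    (h : IsRankPairing D rank) (r : ι) : IsRankPairing {ρ | ρ ∈ D ∧ rank ρ ≠ r} rank := by
  refine ⟨fun ρ hρ σ hσ => h.1 ρ hρ.1 σ hσ.1, fun σ hσ => ?_⟩
  obtain ⟨τ, a, hτ, ha, hfib⟩ := h.2 σ hσ.1
  refine ⟨τ, a, hτ, ha, Eq.trans ?_ hfib⟩
  ext ρ
  exact ⟨fun h => ⟨h.1.1, h.2⟩, fun h' => ⟨⟨h'.1, h'.2 ▸ hσ.2⟩, h'.2⟩⟩

/-- Collapsing the level sets of `rank` from the top down removes all faces of `K` outside `L`. -/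
theorem hEquiv_of_isRankPairing {rank : Finset V → ι} {K L : AbsSC V}
    (hLK : L.faces ⊆ K.faces) (hfin : (K.faces \ L.faces).Finite)
    (hpair : IsRankPairing (K.faces \ L.faces) rank) : K.HEquiv L := by
  induction hN : (K.faces \ L.faces).ncard using Nat.strong_induction_on generalizing K with
  | _ N ih =>
  rcases (K.faces \ L.faces).eq_empty_or_nonempty with hD | hD
  · rw [ext (hLK.antisymm' (Set.sdiff_eq_empty.mp hD))]
    exact ⟨.refl _⟩
  obtain ⟨σ, hσ, hmax⟩ := Set.exists_max_image _ rank hfin hD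
  obtain ⟨τ, a, hτ, ha, hfib⟩ := hpair.2 σ hσ
  have hfib' (ρ) (hρ : ρ ∈ K.faces \ L.faces) : ρ = τ ∨ ρ = insert a τ ↔ rank ρ = rank σ := by
    change ρ ∈ ({τ, insert a τ} : Set _) ↔ _
    rw [← hfib]
    exact ⟨And.right, And.intro hρ⟩
  have hpairD : ∀ ρ ∈ ({τ, insert a τ} : Set _), ρ ∈ K.faces \ L.faces := by
    rw [← hfib]; exact fun ρ h => h.1
  have hτD := hpairD τ (by simp)
  have hfree : K.IsFreeFace τ a := fun ρ hρ hτρ => by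
    have hρD : ρ ∈ K.faces \ L.faces :=
      ⟨hρ, fun hρL => hτD.2 (L.down_closed ρ hρL τ hτρ hτ.ne_empty)⟩
    refine (hfib' ρ hρD).mpr (le_antisymm (hmax ρ hρD) ?_)
    exact ((hfib' τ hτD).mp (Or.inl rfl)) ▸ hpair.1 τ hτD ρ hρD hτρ
  have hD' : (K.collapse τ a hfree).faces \ L.faces =
      {ρ | ρ ∈ K.faces \ L.faces ∧ rank ρ ≠ rank σ} := by
    ext ρ
    constructor
    · rintro ⟨⟨hρK, hρτ⟩, hρL⟩
      exact ⟨⟨hρK, hρL⟩, fun h => hρτ ((hfib' ρ ⟨hρK, hρL⟩).mpr h)⟩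
    · rintro ⟨hρD, hρ⟩
      exact ⟨⟨hρD.1, fun h => hρ ((hfib' ρ hρD).mp h)⟩, hρD.2⟩
  refine (hEquiv_collapse hτ ha (hpairD _ (by simp)).1 hfree).trans (ih _ ?_
    (fun ρ hρ => ⟨hLK hρ, fun h => (hpairD ρ h).2 hρ⟩) (hD' ▸ hfin.subset fun ρ h => h.1)
    (hD' ▸ hpair.sep_ne _) rfl)
  rw [hD', ← hN]
  exact Set.ncard_lt_ncard
    ⟨fun ρ h => h.1, fun h => (h hτD).2 ((hfib' τ hτD).mp (Or.inl rfl))⟩ hfin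

end AbsSC

theorem card_symmDiff_le_two_of_mem {α : Type*} [DecidableEq α] {A u v : Finset α} {x : α}
    (hxA : x ∉ A) (hxu : x ∈ u) (hxv : x ∈ v)
    (hu : #(symmDiff A u) ≤ 2) (hv : #(symmDiff A v) ≤ 2) : #(symmDiff u v) ≤ 2 := by
  -- `x` lies in both `A ∆ u` and `A ∆ v`, so it cancels in their symmetric difference `u ∆ v`
  have hx (w : Finset α) (hxw : x ∈ w) : x ∈ symmDiff A w := by simp [mem_symmDiff, hxA, hxw]
  have hsub : symmDiff u v ⊆ (symmDiff A u).erase x ∪ (symmDiff A v).erase x := by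
    have : symmDiff u v = symmDiff (symmDiff A u) (symmDiff A v) := by
      rw [symmDiff_symmDiff_symmDiff_comm, symmDiff_self, bot_symmDiff]
    intro w hw
    rw [this, mem_symmDiff] at hw
    rcases hw with ⟨h₁, h₂⟩ | ⟨h₁, h₂⟩
    · exact mem_union_left _ (mem_erase.mpr ⟨fun h => h₂ (h ▸ hx v hxv), h₁⟩)
    · exact mem_union_right _ (mem_erase.mpr ⟨fun h => h₂ (h ▸ hx u hxu), h₁⟩)
  calc #(symmDiff u v) ≤ #((symmDiff A u).erase x) + #((symmDiff A v).erase x) :=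
        (card_le_card hsub).trans (card_union_le _ _)
    _ ≤ 2 := by
        rw [card_erase_of_mem (hx u hxu), card_erase_of_mem (hx v hxv)]
        omega

namespace VRc

open Encodable

variable {F : Set (Finset ℕ)} {x : ℕ} {ρ σ : Finset (Finset ℕ)}

theorem insert_insert_mem {r : ℕ} {u v : Finset ℕ} (hu : insert u σ ∈ (VRc F r).faces)
    (hv : insert v σ ∈ (VRc F r).faces) (huv : #(symmDiff u v) ≤ r) :
    insert u (insert v σ) ∈ (VRc F r).faces := by
  obtain ⟨-, huF, hud⟩ := hu
  obtain ⟨-, hvF, hvd⟩ := hv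
  refine ⟨insert_nonempty _ _, ?_, ?_⟩
  · simp only [forall_mem_insert] at huF hvF ⊢
    exact ⟨huF.1, hvF⟩
  · simp only [forall_mem_insert] at hud hvd ⊢
    grind

def conePts (F : Set (Finset ℕ)) (x : ℕ) (σ : Finset (Finset ℕ)) : Set (Finset ℕ) :=
  {v | x ∈ v ∧ insert v σ ∈ (VRc F 2).faces}

theorem conePts_anti (h : ρ ⊆ σ) : conePts F x σ ⊆ conePts F x ρ :=
  fun v ⟨hxv, hv⟩ =>
    ⟨hxv, (VRc F 2).down_closed _ hv _ (insert_subset_insert v h) (insert_ne_empty v ρ)⟩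

theorem conePts_insert {A v : Finset ℕ} (hA : A ∈ σ) (hxA : x ∉ A)
    (hv : v ∈ conePts F x σ) : conePts F x (insert v σ) = conePts F x σ := by
  refine (conePts_anti (subset_insert v σ)).antisymm fun u hu => ⟨hu.1, ?_⟩
  have hclose (w) (hw : w ∈ conePts F x σ) : #(symmDiff A w) ≤ 2 :=
    hw.2.2.2 A (mem_insert_of_mem hA) w (mem_insert_self w σ)
  exact insert_insert_mem hu.2 hv.2
    (card_symmDiff_le_two_of_mem hxA hu.1 hv.1 (hclose u hu) (hclose v hv))

theorem conePts_erase (hσ : σ ∈ (VRc F 2).faces) {A v : Finset ℕ}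
    (hA : A ∈ σ) (hxA : x ∉ A) (hv : v ∈ σ) (hxv : x ∈ v) :
    conePts F x (σ.erase v) = conePts F x σ := by
  have hAv : A ∈ σ.erase v := mem_erase.mpr ⟨(ne_of_mem_of_not_mem' hxv hxA).symm, hA⟩
  conv_rhs => rw [← insert_erase hv]
  exact (conePts_insert hAv hxA ⟨hxv, (insert_erase hv).symm ▸ hσ⟩).symm

open Classical in
/-- Taking the least cone point, in the `Encodable` order, is what makes `rank` monotone. -/
noncomputable def apex (F : Set (Finset ℕ)) (x : ℕ) (σ : Finset (Finset ℕ)) : Finset ℕ :=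
  if h : (conePts F x σ).Nonempty then Function.argminOn encode _ h else ∅

theorem apex_mem (h : (conePts F x σ).Nonempty) : apex F x σ ∈ conePts F x σ := by
  rw [apex, dif_pos h]
  exact Function.argminOn_mem _ _ _

theorem encode_apex_le {v : Finset ℕ} (hv : v ∈ conePts F x σ) :
    encode (apex F x σ) ≤ encode v := by
  rw [apex, dif_pos ⟨v, hv⟩]
  exact Function.argminOn_le _ _ hv

theorem apex_congr (h : conePts F x ρ = conePts F x σ) : apex F x ρ = apex F x σ := by
  rw [apex, apex, h]

noncomputable def base (F : Set (Finset ℕ)) (x : ℕ) (σ : Finset (Finset ℕ)) : Finset (Finset ℕ) :=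
  σ.erase (apex F x σ)

noncomputable def rank (F : Set (Finset ℕ)) (x : ℕ) (σ : Finset (Finset ℕ)) : ℕ ×ₗ ℕ ×ₗ ℕ :=
  toLex (#(base F x σ), toLex (encode (apex F x σ), encode (base F x σ)))

theorem rank_eq_iff :
    rank F x ρ = rank F x σ ↔ base F x ρ = base F x σ ∧ apex F x ρ = apex F x σ := by
  simp only [rank, toLex_inj, Prod.mk.injEq, encode_inj]
  exact ⟨fun ⟨_, ha, hb⟩ => ⟨hb, ha⟩, fun ⟨hb, ha⟩ => ⟨congrArg card hb, ha, hb⟩⟩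

theorem mem_of_conePts_nonempty (hσ : σ ≠ ∅) (h : (conePts F x σ).Nonempty) :
    σ ∈ (VRc F 2).faces :=
  (VRc F 2).down_closed _ h.some_mem.2 σ (subset_insert _ σ) hσ

theorem mem_starCluster_iff :
    σ ∈ ((VRc F 2).starCluster (VRc {A | A ∈ F ∧ x ∈ A} 2)).faces ↔
      σ ≠ ∅ ∧ (conePts F x σ).Nonempty := by
  simp only [AbsSC.starCluster, union_singleton]
  refine ⟨fun ⟨hσ, v, hvL, hv⟩ => ⟨hσ, v, (hvL.2.1 v (mem_singleton_self v)).2, hv⟩,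
    fun ⟨hσ, v, hxv, hv⟩ => ⟨hσ, v, ⟨singleton_nonempty v, ?_, ?_⟩, hv⟩⟩
  · simpa using ⟨hv.2.1 v (mem_insert_self v σ), hxv⟩
  · simp

theorem mem_starCluster_sdiff_iff :
    σ ∈ ((VRc F 2).starCluster (VRc {A | A ∈ F ∧ x ∈ A} 2)).faces \
        (VRc {A | A ∈ F ∧ x ∈ A} 2).faces ↔
      (conePts F x σ).Nonempty ∧ ∃ A ∈ σ, x ∉ A := by
  rw [Set.mem_sdiff, mem_starCluster_iff]
  constructor
  · rintro ⟨⟨hσ, hN⟩, hL⟩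
    refine ⟨hN, ?_⟩
    by_contra! hx
    refine hL ?_
    obtain ⟨hne, hF, hd⟩ := mem_of_conePts_nonempty hσ hN
    exact ⟨hne, fun A hA => ⟨hF A hA, hx A hA⟩, hd⟩
  · rintro ⟨hN, A, hA, hxA⟩
    exact ⟨⟨ne_empty_of_mem hA, hN⟩, fun hL => hxA (hL.2.1 A hA).2⟩

theorem rank_mono (hσ : (conePts F x σ).Nonempty) (h : ρ ⊆ σ) : rank F x ρ ≤ rank F x σ := by
  rcases h.eq_or_ssubset with rfl | hlt
  · exact le_rfl
  have hcard : #(base F x ρ) ≤ #(base F x σ) := by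
    have := card_lt_card hlt
    have := card_erase_le (s := ρ) (a := apex F x ρ)
    have := pred_card_le_card_erase (s := σ) (a := apex F x σ)
    unfold base
    omega
  have hapex : encode (apex F x ρ) ≤ encode (apex F x σ) :=
    encode_apex_le (conePts_anti h (apex_mem hσ))
  simp only [rank, Prod.Lex.toLex_le_toLex]
  rcases hcard.lt_or_eq with hc | hc
  · exact Or.inl hc
  refine Or.inr ⟨hc, ?_⟩
  rcases hapex.lt_or_eq with ha | ha
  · exact Or.inl ha
  have hb : base F x ρ = base F x σ := by
    refine eq_of_subset_of_card_le ?_ hc.ge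
    rw [base, base, encode_injective ha]
    exact erase_subset_erase _ h
  exact Or.inr ⟨ha, hb ▸ le_rfl⟩

section Pairing

variable {A : Finset ℕ} (hN : (conePts F x σ).Nonempty) (hA : A ∈ σ) (hxA : x ∉ A)
include hN hA hxA

theorem mem_base : A ∈ base F x σ :=
  mem_erase.mpr ⟨(ne_of_mem_of_not_mem' (apex_mem hN).1 hxA).symm, hA⟩

theorem conePts_base : conePts F x (base F x σ) = conePts F x σ := by
  by_cases hv : apex F x σ ∈ σ
  · exact conePts_erase (mem_of_conePts_nonempty (ne_empty_of_mem hA) hN) hA hxA hv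
      (apex_mem hN).1
  · rw [base, erase_eq_of_notMem hv]

theorem conePts_insert_base :
    conePts F x (insert (apex F x σ) (base F x σ)) = conePts F x σ := by
  rw [conePts_insert (mem_base hN hA hxA) hxA ((conePts_base hN hA hxA).symm ▸ apex_mem hN),
    conePts_base hN hA hxA]

end Pairing

theorem isRankPairing :
    AbsSC.IsRankPairing (((VRc F 2).starCluster (VRc {A | A ∈ F ∧ x ∈ A} 2)).faces \
      (VRc {A | A ∈ F ∧ x ∈ A} 2).faces) (rank F x) := by
  refine ⟨fun ρ _ σ hσ h => rank_mono (mem_starCluster_sdiff_iff.mp hσ).1 h, fun σ hσ => ?_⟩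
  obtain ⟨hN, A, hA, hxA⟩ := mem_starCluster_sdiff_iff.mp hσ
  refine ⟨base F x σ, apex F x σ, ⟨A, mem_base hN hA hxA⟩, notMem_erase _ _, ?_⟩
  ext ρ
  simp only [Set.mem_insert_iff, Set.mem_singleton_iff, rank_eq_iff]
  constructor
  · rintro ⟨-, hb, ha⟩
    by_cases hv : apex F x ρ ∈ ρ
    · exact Or.inr (by rw [← hb, ← ha, base, insert_erase hv])
    · exact Or.inl (by rw [← hb, base, erase_eq_of_notMem hv])
  · rintro (rfl | rfl)
    · have hC := conePts_base hN hA hxA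
      refine ⟨mem_starCluster_sdiff_iff.mpr ⟨hC ▸ hN, A, mem_base hN hA hxA, hxA⟩, ?_,
        apex_congr hC⟩
      rw [base, apex_congr hC, base, erase_idem]
    · have hC := conePts_insert_base hN hA hxA
      refine ⟨mem_starCluster_sdiff_iff.mpr
        ⟨hC ▸ hN, A, mem_insert_of_mem (mem_base hN hA hxA), hxA⟩, ?_, apex_congr hC⟩
      rw [base, apex_congr hC]
      exact erase_insert (notMem_erase _ _)

theorem faces_subset_starCluster :
    (VRc {A | A ∈ F ∧ x ∈ A} 2).faces ⊆
      ((VRc F 2).starCluster (VRc {A | A ∈ F ∧ x ∈ A} 2)).faces := by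
  intro σ ⟨hne, hS, hd⟩
  obtain ⟨v, hv⟩ := hne
  have hσK : σ ∈ (VRc F 2).faces := ⟨⟨v, hv⟩, fun A hA => (hS A hA).1, hd⟩
  exact mem_starCluster_iff.mpr
    ⟨ne_empty_of_mem hv, v, (hS v hv).2, (insert_eq_of_mem hv).symm ▸ hσK⟩

theorem finite_faces (hF : F.Finite) (r : ℕ) : (VRc F r).faces.Finite :=
  hF.toFinset.powerset.finite_toSet.subset fun _ hσ =>
    mem_powerset.mpr fun A hA => hF.mem_toFinset.mpr (hσ.2.1 A hA)

theorem starCluster_hEquiv (hF : F.Finite) (x : ℕ) :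
    ((VRc F 2).starCluster (VRc {A | A ∈ F ∧ x ∈ A} 2)).HEquiv (VRc {A | A ∈ F ∧ x ∈ A} 2) := by
  refine AbsSC.hEquiv_of_isRankPairing faces_subset_starCluster
    ((finite_faces hF 2).subset fun _ hσ => ?_) isRankPairing
  obtain ⟨hN, A, hA, -⟩ := mem_starCluster_sdiff_iff.mp hσ
  exact mem_of_conePts_nonempty (ne_empty_of_mem hA) hN

end VRc

theorem stmt7_general (m n : ℕ) :
    AbsSC.HEquiv
      ((VRc (Fnm m n) 2).starCluster
        (VRc {A | A ⊆ Finset.Icc 1 m ∧ A.card = n ∧ 1 ∈ A} 2))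
      (VRc {A | A ⊆ Finset.Icc 1 m ∧ A.card = n ∧ 1 ∈ A} 2) := by
  have hS : {A | A ⊆ Finset.Icc 1 m ∧ A.card = n ∧ 1 ∈ A} = {A | A ∈ Fnm m n ∧ 1 ∈ A} := by
    ext A
    simp [Fnm, and_assoc]
  have hF : (Fnm m n).Finite :=
    (Icc 1 m).powerset.finite_toSet.subset fun A hA => mem_powerset.mpr hA.1
  rw [hS]
  exact VRc.starCluster_hEquiv hF 1

/-- For `n < m`, with `S₁ = {A ⊆ [m] : |A| = n, 1 ∈ A}`, `L = VR(S₁, 2)`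
and `K = VR(F_n^m, 2)`, the star cluster `SC_K(L)` is homotopy equivalent to `L`. -/
theorem stmt7 (m n : ℕ) (h : n < m) :
    AbsSC.HEquiv
      ((VRc (Fnm m n) 2).starCluster
        (VRc {A | A ⊆ Finset.Icc 1 m ∧ A.card = n ∧ 1 ∈ A} 2))
      (VRc {A | A ⊆ Finset.Icc 1 m ∧ A.card = n ∧ 1 ∈ A} 2) :=
  stmt7_general m n
end
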